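/- arXiv:1708.05188 — 2 statements merged into one kernel-verified Lean document; each statement's English description precedes it below -/
import Mathlib

section
/- For all π, ρ ∈ NC(n), d_H(π,ρ) ≤ |π ∧ ρ| − |π ∨ ρ| ≤ n − 1. -/
/-- A partition of `{1,...,n}` (modeled as a setoid on `Fin n`) is non-crossing. -/
def IsNoncrossing {n : ℕ} (s : Setoid (Fin n)) : Prop :=
  ∀ a b c d : Fin n, a < b → b < c → c < d → s.r a c → s.r b d → s.r a b

/-- `NC n`: the set of non-crossing partitions of `{1,...,n}`, ordered by reverse
refinement (the order induced from the refinement order on setoids). -/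
abbrev NC (n : ℕ) := {s : Setoid (Fin n) // IsNoncrossing s}

/-- The number of blocks of a partition. -/
noncomputable def blocks {n : ℕ} (s : Setoid (Fin n)) : ℕ := Nat.card (Quotient s)

/-- The Hasse diagram of `NC n`: vertices are non-crossing partitions, edges join
pairs where one covers the other. -/
def hasse (n : ℕ) : SimpleGraph (NC n) where
  Adj x y := x ⋖ y ∨ y ⋖ x
  symm := ⟨fun _ _ h => h.symm⟩
  loopless := ⟨fun x h => lt_irrefl x (h.elim CovBy.lt CovBy.lt)⟩

/-!
Going up one covering step in `NC n` merges blocks, so it lowers the block count by at least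
one. Hence `π` and `ρ` are joined through their join `j` by a walk of length at most
`(|π| - |j|) + (|ρ| - |j|)`, and through their meet `m` by one of length at most
`(|m| - |π|) + (|m| - |ρ|)`. The two bounds sum to `2 (|m| - |j|)`.
-/

namespace Setoid

variable {α : Type*}

instance [Finite α] : Finite (Setoid α) :=
  Finite.of_injective (⇑) fun _ _ => eq_iff_rel_eq.2

lemma map_of_le_surjective {s t : Setoid α} (h : s ≤ t) : Function.Surjective (map_of_le h) :=
  Quotient.ind fun a => ⟨Quotient.mk s a, rfl⟩

variable [Finite α]

lemma card_quotient_le_of_le {s t : Setoid α} (h : s ≤ t) :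
    Nat.card (Quotient t) ≤ Nat.card (Quotient s) :=
  Nat.card_le_card_of_surjective _ (map_of_le_surjective h)

lemma card_quotient_lt_of_lt {s t : Setoid α} (h : s < t) :
    Nat.card (Quotient t) < Nat.card (Quotient s) := by
  refine (card_quotient_le_of_le h.le).lt_of_ne fun hcard => h.not_ge fun a b hab => ?_
  have hinj := ((map_of_le_surjective h.le).bijective_of_nat_card_le hcard.ge).injective
  exact Quotient.exact (@hinj ⟦a⟧ ⟦b⟧ (Quotient.sound hab))

lemma card_quotient_le (s : Setoid α) : Nat.card (Quotient s) ≤ Nat.card α :=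
  Nat.card_le_card_of_surjective _ Quotient.mk_surjective

end Setoid

namespace SimpleGraph

variable {α : Type*} [PartialOrder α] [IsStronglyAtomic α] {f : α → ℕ}

theorem hasse_reachable_and_dist_add_le_of_le (hf : StrictAnti f) {a b : α} (hab : a ≤ b) :
    (hasse α).Reachable a b ∧ (hasse α).dist a b + f b ≤ f a := by
  induction h : f a using Nat.strong_induction_on generalizing a with
  | _ k ih =>
  obtain rfl | hlt := hab.eq_or_lt
  · simp [h]
  obtain ⟨x, hax, hxb⟩ := exists_covBy_le_of_lt hlt
  obtain ⟨hreach, hdist⟩ := ih (f x) (h ▸ hf hax.lt) hxb rfl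
  have hadj : (hasse α).Adj a x := Or.inl hax
  have htri := hreach.dist_triangle_right a
  rw [dist_eq_one_iff_adj.2 hadj] at htri
  have hfx := hf hax.lt
  exact ⟨hadj.reachable.trans hreach, by omega⟩

theorem hasse_dist_add_two_mul_le_of_le_of_le (hf : StrictAnti f) {a b c : α}
    (hac : a ≤ c) (hbc : b ≤ c) : (hasse α).dist a b + 2 * f c ≤ f a + f b := by
  obtain ⟨hreach_a, hdist_a⟩ := hasse_reachable_and_dist_add_le_of_le hf hac
  obtain ⟨hreach_b, hdist_b⟩ := hasse_reachable_and_dist_add_le_of_le hf hbc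
  have htri := hreach_b.symm.dist_triangle_right a
  rw [dist_comm (u := c)] at htri
  omega

theorem hasse_dist_add_le_two_mul_of_le_of_le (hf : StrictAnti f) {a b c : α}
    (hca : c ≤ a) (hcb : c ≤ b) : (hasse α).dist a b + f a + f b ≤ 2 * f c := by
  obtain ⟨hreach_a, hdist_a⟩ := hasse_reachable_and_dist_add_le_of_le hf hca
  obtain ⟨hreach_b, hdist_b⟩ := hasse_reachable_and_dist_add_le_of_le hf hcb
  have htri := hreach_b.dist_triangle_right a
  rw [dist_comm (v := c)] at htri
  omega

end SimpleGraph

section NC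

variable {n : ℕ}

lemma hasse_eq_simpleGraph_hasse : hasse n = SimpleGraph.hasse (NC n) := rfl

lemma blocks_strictAnti : StrictAnti fun π : NC n => blocks π.1 :=
  fun _ _ h => Setoid.card_quotient_lt_of_lt h

lemma blocks_le_blocks_add_pred (s t : Setoid (Fin n)) : blocks s ≤ blocks t + (n - 1) := by
  have hs : blocks s ≤ n := by simpa [blocks] using Setoid.card_quotient_le s
  rcases n.eq_zero_or_pos with rfl | hn
  · omega
  · have : Nonempty (Quotient t) := ⟨⟦⟨0, hn⟩⟧⟩
    have : 0 < blocks t := Nat.card_pos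
    omega

end NC

/-- For all `π, ρ ∈ NC(n)`: `d_H(π,ρ) ≤ |π ∧ ρ| - |π ∨ ρ| ≤ n - 1`
(stated additively, where `m` is the meet and `j` the join of `π` and `ρ` in `NC n`). -/
theorem dist_le_meet_join (n : ℕ) (π ρ m j : NC n)
    (hm : IsGLB {π, ρ} m) (hj : IsLUB {π, ρ} j) :
    (hasse n).dist π ρ + blocks j.1 ≤ blocks m.1 ∧
    blocks m.1 ≤ blocks j.1 + (n - 1) := by
  have hjoin := SimpleGraph.hasse_dist_add_two_mul_le_of_le_of_le blocks_strictAnti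
    (hj.1 (by simp) : π ≤ j) (hj.1 (by simp) : ρ ≤ j)
  have hmeet := SimpleGraph.hasse_dist_add_le_two_mul_of_le_of_le blocks_strictAnti
    (hm.1 (by simp) : m ≤ π) (hm.1 (by simp) : m ≤ ρ)
  rw [← hasse_eq_simpleGraph_hasse] at hjoin hmeet
  exact ⟨by omega, blocks_le_blocks_add_pred m.1 j.1⟩
end

section
/- For every π ∈ NC(n), the Hasse-diagram distance between π and its Kreweras complement Kr(π) equals n − 1. -/
/-- `p` is the permutation associated to the partition `s`: each block of `s` is a
cycle of `p`, traversed in increasing order. (Equivalently: `p i` is the least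
element of the block of `i` that is larger than `i` if one exists, and otherwise
the least element of the block of `i`.) -/
def IsBlockPerm {n : ℕ} (s : Setoid (Fin n)) (p : Equiv.Perm (Fin n)) : Prop :=
  ∀ i : Fin n,
    IsLeast {j | s.r i j ∧ i < j} (p i) ∨
    ((¬ ∃ j, s.r i j ∧ i < j) ∧ IsLeast {j | s.r i j} (p i))

/-- The number of cycles of a permutation, counting fixed points as cycles. -/
def cycleCount {n : ℕ} (σ : Equiv.Perm (Fin n)) : ℕ :=
  Multiset.card σ.cycleType + (Finset.univ.filter fun x => σ x = x).card

/-- The norm of a permutation: the least `g` such that `σ` is a product of `g`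
transpositions. -/
noncomputable def permNorm {n : ℕ} (σ : Equiv.Perm (Fin n)) : ℕ :=
  sInf {g | ∃ l : List (Equiv.Perm (Fin n)),
    l.length = g ∧ (∀ t ∈ l, t.IsSwap) ∧ l.prod = σ}

/-! Write `|x|` for the number of blocks of `x`. Walking down from `π` to the partition into
singletons and back up to `κ` takes `(n - |π|) + (n - |κ|)` steps, and `|π| + |κ| = n + 1`: the
non-maximal elements of the blocks of `π` are the excedances `i < P_π i`, and the excedances of
`P_π` and of `P_π⁻¹ · (1 2 ... n)` number `n - 1` together.

Conversely, every cover in `NC(n)` merges exactly two blocks, so `x ↦ |x| - 2 |x ⊔ κ|` changes by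
at most one along each edge of the Hasse diagram. It equals `|π| - 2` at `π`, since
`π ⊔ κ = 1̂`, and `-|κ|` at `κ`; these differ by `n - 1`. -/

open Finset

namespace Setoid

variable {α : Type*}

instance instFinite [Finite α] : Finite (Setoid α) :=
  Finite.of_injective (fun s : Setoid α => s.r) fun _ _ h => Setoid.ext fun a b => by
    simp only at h; rw [h]

def mergeClasses (s : Setoid α) (u v : α) : Setoid α where
  r i j := s.r i j ∨ (s.r i u ∧ s.r v j) ∨ (s.r i v ∧ s.r u j)
  iseqv := by
    constructor
    · exact fun i => Or.inl (s.refl' i)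
    · rintro i j (h | ⟨h₁, h₂⟩ | ⟨h₁, h₂⟩)
      · exact Or.inl (s.symm' h)
      · exact Or.inr (Or.inr ⟨s.symm' h₂, s.symm' h₁⟩)
      · exact Or.inr (Or.inl ⟨s.symm' h₂, s.symm' h₁⟩)
    · rintro i j k (h | ⟨h₁, h₂⟩ | ⟨h₁, h₂⟩) (g | ⟨g₁, g₂⟩ | ⟨g₁, g₂⟩)
      · exact Or.inl (s.trans' h g)
      · exact Or.inr (Or.inl ⟨s.trans' h g₁, g₂⟩)
      · exact Or.inr (Or.inr ⟨s.trans' h g₁, g₂⟩)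
      · exact Or.inr (Or.inl ⟨h₁, s.trans' h₂ g⟩)
      · exact Or.inl (s.trans' (s.trans' h₁ (s.trans' (s.symm' g₁) (s.symm' h₂))) g₂)
      · exact Or.inl (s.trans' h₁ g₂)
      · exact Or.inr (Or.inr ⟨h₁, s.trans' h₂ g⟩)
      · exact Or.inl (s.trans' h₁ g₂)
      · exact Or.inl (s.trans' (s.trans' h₁ (s.trans' (s.symm' g₁) (s.symm' h₂))) g₂)

variable {s t : Setoid α} {u v i j : α}

lemma le_mergeClasses (s : Setoid α) (u v : α) : s ≤ s.mergeClasses u v :=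
  fun _ _ h => Or.inl h

lemma mergeClasses_rel (s : Setoid α) (u v : α) : (s.mergeClasses u v).r u v :=
  Or.inr (Or.inl ⟨s.refl' u, s.refl' v⟩)

lemma mergeClasses_le (hst : s ≤ t) (huv : t.r u v) : s.mergeClasses u v ≤ t := by
  rintro i j (h | ⟨h₁, h₂⟩ | ⟨h₁, h₂⟩)
  · exact hst h
  · exact t.trans' (hst h₁) (t.trans' huv (hst h₂))
  · exact t.trans' (hst h₁) (t.trans' (t.symm' huv) (hst h₂))

lemma mergeClasses_comm (s : Setoid α) (u v : α) : s.mergeClasses u v = s.mergeClasses v u := by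
  ext i j
  change _ ∨ _ ∨ _ ↔ _ ∨ _ ∨ _
  tauto

lemma mergeClasses_eq_self (h : s.r u v) : s.mergeClasses u v = s :=
  le_antisymm (mergeClasses_le le_rfl h) (le_mergeClasses s u v)

lemma mergeClasses_sup (s t : Setoid α) (u v : α) :
    s.mergeClasses u v ⊔ t = (s ⊔ t).mergeClasses u v := by
  apply le_antisymm
  · refine sup_le (mergeClasses_le (le_sup_left.trans (le_mergeClasses _ u v))
      (mergeClasses_rel _ u v)) (le_sup_right.trans (le_mergeClasses _ u v))
  · exact mergeClasses_le (sup_le_sup_right (le_mergeClasses s u v) t)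
      (le_def.1 le_sup_left (mergeClasses_rel s u v))

lemma mergeClasses_rel_of_rel_of_rel (hi : s.r i u ∨ s.r i v) (hj : s.r j u ∨ s.r j v) :
    (s.mergeClasses u v).r i j := by
  have huv := mergeClasses_rel s u v
  have hle := le_mergeClasses s u v
  rcases hi with hi | hi <;> rcases hj with hj | hj
  · exact hle (s.trans' hi (s.symm' hj))
  · exact Setoid.trans' _ (hle hi) (Setoid.trans' _ huv (hle (s.symm' hj)))
  · exact Setoid.trans' _ (hle hi) (Setoid.trans' _ (Setoid.symm' _ huv) (hle (s.symm' hj)))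
  · exact hle (s.trans' hi (s.symm' hj))

lemma rel_of_mergeClasses_rel (h : (s.mergeClasses u v).r i j) (hi : ¬ (s.r i u ∨ s.r i v)) :
    s.r i j := by
  rcases h with h | ⟨h, -⟩ | ⟨h, -⟩
  exacts [h, absurd (Or.inl h) hi, absurd (Or.inr h) hi]

lemma rel_or_rel_of_mergeClasses_rel (h : (s.mergeClasses u v).r i j)
    (hi : s.r i u ∨ s.r i v) : s.r j u ∨ s.r j v := by
  rcases h with h | ⟨-, h⟩ | ⟨-, h⟩
  · exact hi.imp (s.trans' (s.symm' h)) (s.trans' (s.symm' h))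
  · exact Or.inr (s.symm' h)
  · exact Or.inl (s.symm' h)

end Setoid


section BlockTops

open scoped Classical

variable {n : ℕ} {s t : Setoid (Fin n)} {a b : Fin n}

noncomputable def blockTops (s : Setoid (Fin n)) : Finset (Fin n) :=
  {i | ∀ j, s.r i j → j ≤ i}

noncomputable def blockTop (s : Setoid (Fin n)) (a : Fin n) : Fin n :=
  ({j | s.r a j} : Finset (Fin n)).max' ⟨a, by simp⟩

lemma mem_blockTops : a ∈ blockTops s ↔ ∀ j, s.r a j → j ≤ a := by
  simp [blockTops]

lemma eq_of_rel_of_mem_blockTops (ha : a ∈ blockTops s) (hb : b ∈ blockTops s) (h : s.r a b) :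
    a = b :=
  le_antisymm (mem_blockTops.1 hb a (s.symm' h)) (mem_blockTops.1 ha b h)

lemma rel_blockTop (s : Setoid (Fin n)) (a : Fin n) : s.r a (blockTop s a) := by
  have h := max'_mem ({j | s.r a j} : Finset (Fin n)) ⟨a, by simp⟩
  simp only [mem_filter, mem_univ, true_and] at h
  exact h

lemma le_blockTop (h : s.r a b) : b ≤ blockTop s a :=
  le_max' _ b (by simpa using h)

lemma blockTop_mem_blockTops (s : Setoid (Fin n)) (a : Fin n) : blockTop s a ∈ blockTops s :=
  mem_blockTops.2 fun _ h => le_blockTop (s.trans' (rel_blockTop s a) h)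

lemma blockTop_eq_blockTop (h : s.r a b) : blockTop s a = blockTop s b :=
  eq_of_rel_of_mem_blockTops (blockTop_mem_blockTops s a) (blockTop_mem_blockTops s b)
    (s.trans' (s.symm' (rel_blockTop s a)) (s.trans' h (rel_blockTop s b)))

lemma blockTop_eq_self (ha : a ∈ blockTops s) : blockTop s a = a :=
  eq_of_rel_of_mem_blockTops (blockTop_mem_blockTops s a) ha (s.symm' (rel_blockTop s a))

noncomputable def quotientEquivBlockTops (s : Setoid (Fin n)) : Quotient s ≃ blockTops s where
  toFun := Quotient.lift (fun a => ⟨blockTop s a, blockTop_mem_blockTops s a⟩)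
    fun _ _ h => Subtype.ext (blockTop_eq_blockTop h)
  invFun i := Quotient.mk s i.1
  left_inv := by
    rintro ⟨a⟩
    exact Quotient.sound (s.symm' (rel_blockTop s a))
  right_inv i := Subtype.ext (blockTop_eq_self i.2)

lemma blocks_eq_card_blockTops (s : Setoid (Fin n)) : blocks s = #(blockTops s) := by
  rw [blocks, Nat.card_congr (quotientEquivBlockTops s), Nat.card_eq_finsetCard]

lemma blockTops_anti (h : s ≤ t) : blockTops t ⊆ blockTops s :=
  fun _ hi => mem_blockTops.2 fun j hj => mem_blockTops.1 hi j (h hj)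

lemma blocks_le_blocks_of_le (h : s ≤ t) : blocks t ≤ blocks s := by
  simpa only [blocks_eq_card_blockTops] using card_le_card (blockTops_anti h)

lemma blockTops_mergeClasses (hlt : blockTop s a < blockTop s b) :
    blockTops (s.mergeClasses a b) = (blockTops s).erase (blockTop s a) := by
  ext i
  rw [mem_erase]
  constructor
  · intro hi
    refine ⟨fun hia => ?_, blockTops_anti (Setoid.le_mergeClasses s a b) hi⟩
    have hrel : (s.mergeClasses a b).r (blockTop s a) (blockTop s b) :=
      Or.inr (Or.inl ⟨s.symm' (rel_blockTop s a), rel_blockTop s b⟩)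
    exact (mem_blockTops.1 (hia ▸ hi) _ hrel).not_gt hlt
  · rintro ⟨hne, hi⟩
    refine mem_blockTops.2 fun j hj => ?_
    rcases hj with hj | ⟨hia, -⟩ | ⟨hib, haj⟩
    · exact mem_blockTops.1 hi j hj
    · exact absurd ((blockTop_eq_self hi).symm.trans (blockTop_eq_blockTop hia)) hne
    · calc j ≤ blockTop s a := le_blockTop haj
        _ ≤ blockTop s b := hlt.le
        _ = i := (blockTop_eq_blockTop hib).symm.trans (blockTop_eq_self hi)

lemma blocks_mergeClasses_add_one (h : ¬ s.r a b) : blocks (s.mergeClasses a b) + 1 = blocks s := by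
  have hne : blockTop s a ≠ blockTop s b := fun e =>
    h (s.trans' (rel_blockTop s a) (e ▸ s.symm' (rel_blockTop s b)))
  rcases hne.lt_or_gt with hlt | hlt
  · rw [blocks_eq_card_blockTops, blocks_eq_card_blockTops, blockTops_mergeClasses hlt,
      card_erase_add_one (blockTop_mem_blockTops s a)]
  · rw [Setoid.mergeClasses_comm, blocks_eq_card_blockTops, blocks_eq_card_blockTops,
      blockTops_mergeClasses hlt,
      card_erase_add_one (blockTop_mem_blockTops s b)]

lemma blocks_le_blocks_mergeClasses_add_one (s : Setoid (Fin n)) (a b : Fin n) :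
    blocks s ≤ blocks (s.mergeClasses a b) + 1 := by
  by_cases h : s.r a b
  · rw [Setoid.mergeClasses_eq_self h]
    exact Nat.le_succ _
  · rw [blocks_mergeClasses_add_one h]

end BlockTops

lemma blocks_bot (n : ℕ) : blocks (⊥ : Setoid (Fin n)) = n := by
  rw [blocks, Nat.card_congr Setoid.quotientBotEquiv, Nat.card_fin]

lemma blocks_top (m : ℕ) : blocks (⊤ : Setoid (Fin (m + 1))) = 1 :=
  Nat.card_eq_one_iff_unique.2
    ⟨⟨fun a b => Quotient.inductionOn₂ a b fun _ _ => Quotient.sound (by simp [Setoid.top_def])⟩,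
      ⟨⟦0⟧⟩⟩

section Noncrossing

variable {n : ℕ} {x y : Setoid (Fin n)}

lemma isNoncrossing_bot (n : ℕ) : IsNoncrossing (⊥ : Setoid (Fin n)) := by
  intro a b c _ hab hbc _ hac _
  exact absurd (by simpa [Setoid.bot_def] using hac) (hab.trans hbc).ne

lemma IsNoncrossing.lt_and_lt_of_rel (hx : IsNoncrossing x) {f₁ f₂ e e' : Fin n}
    (hf : x.r f₁ f₂) (h₁ : f₁ < e) (h₂ : e < f₂) (he : ¬ x.r f₁ e) (hee' : x.r e e') :
    f₁ < e' ∧ e' < f₂ := by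
  have hne₁ : e' ≠ f₁ := fun h => he (x.symm' (h ▸ hee'))
  have hne₂ : e' ≠ f₂ := fun h => he (x.trans' hf (x.symm' (h ▸ hee')))
  refine ⟨hne₁.symm.lt_of_le (not_lt.1 fun h => he ?_), hne₂.lt_of_le (not_lt.1 fun h => he ?_)⟩
  · exact x.trans' (x.symm' (hx e' f₁ e f₂ h h₁ h₂ (x.symm' hee') hf)) (x.symm' hee')
  · exact hx f₁ e f₂ e' h₁ h₂ h hf hee'

lemma exists_consecutive_rel_not_rel (h : ¬ y ≤ x) :
    ∃ a b, a < b ∧ y.r a b ∧ ¬ x.r a b ∧ ∀ k, a < k → k < b → ¬ y.r a k := by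
  set P : Fin n × Fin n → Prop := fun q => q.1 < q.2 ∧ y.r q.1 q.2 ∧ ¬ x.r q.1 q.2
  classical
  have hP : (univ.filter P).Nonempty := by
    obtain ⟨a, b, hy, hx⟩ : ∃ a b, y.r a b ∧ ¬ x.r a b := by
      simpa [Setoid.le_def] using h
    rcases lt_trichotomy a b with hab | rfl | hab
    · exact ⟨(a, b), by simpa [P] using ⟨hab, hy, hx⟩⟩
    · exact absurd (x.refl' a) hx
    · exact ⟨(b, a), by simpa [P] using ⟨hab, y.symm' hy, fun h => hx (x.symm' h)⟩⟩
  obtain ⟨⟨a, b⟩, hq, hmin⟩ := exists_min_image (univ.filter P) (fun q => (q.2 : ℕ) - q.1) hP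
  simp only [mem_filter, mem_univ, true_and, P] at hq hmin
  obtain ⟨hab, hy, hx⟩ := hq
  refine ⟨a, b, hab, hy, hx, fun k hak hkb hyk => ?_⟩
  by_cases hxk : x.r a k
  · have := hmin (k, b) ⟨hkb, y.trans' (y.symm' hyk) hy, fun h => hx (x.trans' hxk h)⟩
    simp only [Fin.lt_def] at hak hkb hab this
    omega
  · have := hmin (a, k) ⟨hak, hyk, hxk⟩
    simp only [Fin.lt_def] at hak hkb hab this
    omega

/- The classes of `a` and `b` each lie on one side of the arc `f₁ f₂`. They lie on different
sides, so `f₁` or `f₂` is an element of the `y`-block of `a` strictly between `a` and `b`. -/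
lemma IsNoncrossing.false_of_separates_mergeClasses (hx : IsNoncrossing x) (hxy : x ≤ y)
    {a b : Fin n} (hab : a < b) (hgap : ∀ k, a < k → k < b → ¬ y.r a k) {f₁ f₂ e e' : Fin n}
    (hf : x.r f₁ f₂) (h₁ : f₁ < e) (h₂ : e < f₂) (he' : e' < f₁ ∨ f₂ < e')
    (hf₁ : ¬ (x.r f₁ a ∨ x.r f₁ b)) (hy : y.r a f₁)
    (he : x.r e a ∨ x.r e b) (he'' : x.r e' a ∨ x.r e' b) : False := by
  have inside : ∀ g, ¬ x.r f₁ g → x.r e g → f₁ < g ∧ g < f₂ := fun g hg h =>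
    hx.lt_and_lt_of_rel hf h₁ h₂ (fun h' => hg (x.trans' h' h)) h
  have outside : ∀ g, ¬ x.r f₁ g → x.r e' g → ¬ (f₁ < g ∧ g < f₂) := fun g hg h hin => by
    have := hx.lt_and_lt_of_rel hf hin.1 hin.2 hg (x.symm' h)
    rcases he' with h' | h' <;> exact absurd h' (by simp [this.1.le, this.2.le])
  have ha : a ≠ f₁ := fun h => hf₁ (Or.inl (h ▸ x.refl' a))
  have hb : b ≠ f₂ := fun h => hf₁ (Or.inr (h ▸ hf))
  simp only [not_or] at hf₁
  rcases he with hea | heb <;> rcases he'' with hea' | heb'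
  · exact outside a hf₁.1 hea' (inside a hf₁.1 hea)
  · have := inside a hf₁.1 hea
    have := outside b hf₁.2 heb'
    exact hgap f₂ (by omega) (by omega) (y.trans' hy (hxy hf))
  · have := inside b hf₁.2 heb
    have := outside a hf₁.1 hea'
    exact hgap f₁ (by omega) (by omega) hy
  · exact outside b hf₁.2 heb' (inside b hf₁.2 heb)

lemma IsNoncrossing.mergeClasses (hx : IsNoncrossing x) (hy : IsNoncrossing y) (hxy : x ≤ y)
    {a b : Fin n} (hab : a < b) (hy_ab : y.r a b) (hgap : ∀ k, a < k → k < b → ¬ y.r a k) :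
    IsNoncrossing (x.mergeClasses a b) := by
  intro a' b' c' d' h₁ h₂ h₃ hac hbd
  have hle : x.mergeClasses a b ≤ y := Setoid.mergeClasses_le hxy hy_ab
  have hy' : y.r a' b' := hy a' b' c' d' h₁ h₂ h₃ (hle hac) (hle hbd)
  have hya : ∀ i, x.r i a ∨ x.r i b → y.r a i := fun i hi =>
    hi.elim (fun h => y.symm' (hxy h)) (fun h => y.trans' hy_ab (y.symm' (hxy h)))
  by_contra hne
  by_cases ha' : x.r a' a ∨ x.r a' b
  · have hb' : ¬ (x.r b' a ∨ x.r b' b) := fun hb' =>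
      hne (Setoid.mergeClasses_rel_of_rel_of_rel ha' hb')
    exact hx.false_of_separates_mergeClasses hxy hab hgap (Setoid.rel_of_mergeClasses_rel hbd hb')
      h₂ h₃ (Or.inl h₁) hb' (y.trans' (hya a' ha') hy')
      (Setoid.rel_or_rel_of_mergeClasses_rel hac ha') ha'
  · have hac' := Setoid.rel_of_mergeClasses_rel hac ha'
    by_cases hb' : x.r b' a ∨ x.r b' b
    · exact hx.false_of_separates_mergeClasses hxy hab hgap hac' h₁ h₂ (Or.inr h₃) ha'
        (y.trans' (hya b' hb') (y.symm' hy')) hb' (Setoid.rel_or_rel_of_mergeClasses_rel hbd hb')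
    · exact hne (Or.inl (hx a' b' c' d' h₁ h₂ h₃ hac' (Setoid.rel_of_mergeClasses_rel hbd hb')))

lemma exists_noncrossing_mergeClasses (hx : IsNoncrossing x) (hy : IsNoncrossing y)
    (hlt : x < y) :
    ∃ a b, ¬ x.r a b ∧ x.mergeClasses a b ≤ y ∧ IsNoncrossing (x.mergeClasses a b) := by
  obtain ⟨a, b, hab, hy_ab, hx_ab, hgap⟩ := exists_consecutive_rel_not_rel hlt.not_ge
  exact ⟨a, b, hx_ab, Setoid.mergeClasses_le hlt.le hy_ab,
    hx.mergeClasses hy hlt.le hab hy_ab hgap⟩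

end Noncrossing

lemma SimpleGraph.Walk.abs_sub_le_length {V : Type*} {G : SimpleGraph V} {f : V → ℤ}
    (hf : ∀ ⦃x y⦄, G.Adj x y → |f x - f y| ≤ 1) {u v : V} (w : G.Walk u v) :
    |f u - f v| ≤ w.length := by
  induction w with
  | nil => simp
  | @cons u v _ huv w ih =>
    calc |f u - f _| ≤ |f u - f v| + |f v - f _| := abs_sub_le _ _ _
      _ ≤ 1 + w.length := add_le_add (hf huv) ih
      _ = (w.cons huv).length := by push_cast [SimpleGraph.Walk.length_cons]; ring

lemma SimpleGraph.Reachable.abs_sub_le_dist {V : Type*} {G : SimpleGraph V} {f : V → ℤ}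
    (hf : ∀ ⦃x y⦄, G.Adj x y → |f x - f y| ≤ 1) {u v : V} (h : G.Reachable u v) :
    |f u - f v| ≤ G.dist u v := by
  obtain ⟨w, hw⟩ := h.exists_walk_length_eq_dist
  exact hw ▸ w.abs_sub_le_length hf

namespace NC

variable {n : ℕ}

instance : OrderBot (NC n) := Subtype.orderBot (isNoncrossing_bot n)

lemma exists_eq_mergeClasses_of_covBy {x y : NC n} (h : x ⋖ y) :
    ∃ a b, ¬ x.1.r a b ∧ y.1 = x.1.mergeClasses a b := by
  obtain ⟨a, b, hab, hle, hnc⟩ := exists_noncrossing_mergeClasses x.2 y.2 h.lt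
  refine ⟨a, b, hab, ?_⟩
  rcases h.eq_or_eq (c := ⟨_, hnc⟩) (Setoid.le_mergeClasses x.1 a b) hle with hz | hz
  · exact absurd (hz ▸ Setoid.mergeClasses_rel x.1 a b) hab
  · exact congrArg Subtype.val hz.symm

lemma blocks_add_one_of_covBy {x y : NC n} (h : x ⋖ y) : blocks y.1 + 1 = blocks x.1 := by
  obtain ⟨a, b, hab, hy⟩ := exists_eq_mergeClasses_of_covBy h
  rw [hy, blocks_mergeClasses_add_one hab]

lemma exists_walk_of_le {x y : NC n} (h : x ≤ y) :
    ∃ w : (hasse n).Walk x y, w.length + blocks y.1 = blocks x.1 := by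
  obtain rfl | hlt := h.eq_or_lt
  · exact ⟨.nil, zero_add _⟩
  obtain ⟨z, hxz, hzy⟩ := exists_covBy_le_of_lt hlt
  have hb := blocks_add_one_of_covBy hxz
  obtain ⟨w, hw⟩ := exists_walk_of_le hzy
  exact ⟨.cons (show (hasse n).Adj x z from Or.inl hxz) w, by
    rw [SimpleGraph.Walk.length_cons]; omega⟩
termination_by blocks x.1
decreasing_by omega

lemma exists_walk_length_add_blocks_add_blocks (x y : NC n) :
    ∃ w : (hasse n).Walk x y, w.length + blocks x.1 + blocks y.1 = 2 * n := by
  obtain ⟨wx, hx⟩ := exists_walk_of_le (bot_le : ⊥ ≤ x)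
  obtain ⟨wy, hy⟩ := exists_walk_of_le (bot_le : ⊥ ≤ y)
  have hbot : blocks (⊥ : NC n).1 = n := blocks_bot n
  refine ⟨wx.reverse.append wy, ?_⟩
  rw [SimpleGraph.Walk.length_append, SimpleGraph.Walk.length_reverse]
  omega

noncomputable def potential (t : Setoid (Fin n)) (x : NC n) : ℤ := blocks x.1 - 2 * blocks (x.1 ⊔ t)

lemma abs_potential_sub_le_one_of_adj (t : Setoid (Fin n)) {x y : NC n}
    (h : (hasse n).Adj x y) : |potential t x - potential t y| ≤ 1 := by
  wlog hxy : x ⋖ y generalizing x y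
  · rw [abs_sub_comm]
    exact this h.symm (h.resolve_left hxy)
  obtain ⟨a, b, hab, hy⟩ := exists_eq_mergeClasses_of_covBy hxy
  have hsup : y.1 ⊔ t = (x.1 ⊔ t).mergeClasses a b := by
    rw [hy, Setoid.mergeClasses_sup]
  have h₁ : blocks y.1 + 1 = blocks x.1 := hy ▸ blocks_mergeClasses_add_one hab
  have h₂ := hsup ▸ blocks_le_blocks_mergeClasses_add_one (x.1 ⊔ t) a b
  have h₃ := hsup ▸ blocks_le_blocks_of_le (Setoid.le_mergeClasses (x.1 ⊔ t) a b)
  rw [potential, potential, abs_le]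
  omega

end NC

section BlockPerm

variable {n : ℕ} {s : Setoid (Fin n)} {p : Equiv.Perm (Fin n)}

lemma IsBlockPerm.rel_apply (hp : IsBlockPerm s p) (i : Fin n) : s.r i (p i) :=
  (hp i).elim (fun h => h.1.1) (fun h => h.2.1)

lemma IsBlockPerm.mem_blockTops_iff (hp : IsBlockPerm s p) {i : Fin n} :
    i ∈ blockTops s ↔ ¬ i < p i := by
  rw [mem_blockTops]
  refine ⟨fun h hlt => (h _ (hp.rel_apply i)).not_gt hlt, fun h j hj => not_lt.1 fun hij => ?_⟩
  rcases hp i with hc | hc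
  · exact h hc.1.2
  · exact hc.1 ⟨j, hj, hij⟩

lemma IsBlockPerm.blocks_add_card_lt_apply (hp : IsBlockPerm s p) :
    blocks s + #{i | i < p i} = n := by
  have : blockTops s = ({i | ¬ i < p i} : Finset (Fin n)) := by
    ext i
    rw [hp.mem_blockTops_iff, mem_filter, and_iff_right (mem_univ i)]
  rw [blocks_eq_card_blockTops, this, add_comm, card_filter_add_card_filter_not, card_univ,
    Fintype.card_fin]

end BlockPerm

section Kreweras

variable {m : ℕ} {s t : Setoid (Fin (m + 1))} {p : Equiv.Perm (Fin (m + 1))}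

lemma card_lt_apply_add_card_lt_kreweras_apply (p : Equiv.Perm (Fin (m + 1))) :
    #{i | i < p i} + #{i | i < (p⁻¹ * finRotate (m + 1)) i} = m := by
  have h₁ : #{i | i < p i} = ∑ j, if p⁻¹ j < j then 1 else 0 := by
    rw [card_filter, ← Equiv.sum_comp p (fun j => if p⁻¹ j < j then 1 else 0)]
    simp only [Equiv.Perm.coe_inv, Equiv.symm_apply_apply]
  have h₂ : #{i | i < (p⁻¹ * finRotate (m + 1)) i} = ∑ j, if j - 1 < p⁻¹ j then 1 else 0 := by
    rw [card_filter, ← Equiv.sum_comp (finRotate (m + 1)) (fun j => if j - 1 < p⁻¹ j then 1 else 0)]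
    simp only [Equiv.Perm.mul_apply, finRotate_apply, add_sub_cancel_right]
  rw [h₁, h₂, ← sum_add_distrib]
  calc ∑ j, ((if p⁻¹ j < j then 1 else 0) + if j - 1 < p⁻¹ j then 1 else 0)
      = ∑ j : Fin (m + 1), if j ≠ 0 then 1 else 0 := by
        refine sum_congr rfl fun j _ => ?_
        rcases eq_or_ne j 0 with rfl | hj
        · simpa [Fin.lt_def] using Fin.is_le _
        · have hsub : ((j - 1 : Fin (m + 1)) : ℕ) = j - 1 := by rw [Fin.coe_sub_one, if_neg hj]
          have hpos : (j : ℕ) ≠ 0 := Fin.val_ne_of_ne hj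
          simp only [Fin.lt_def, hsub, if_pos hj]
          split_ifs <;> omega
    _ = m := by
      rw [← card_filter, filter_ne', card_erase_of_mem (mem_univ _), card_univ, Fintype.card_fin,
        Nat.add_sub_cancel]

lemma eq_top_of_rel_finRotate (h : ∀ i, s.r i (finRotate (m + 1) i)) : s = ⊤ := by
  have h₀ : ∀ a, s.r 0 a := Fin.induction (s.refl' 0) fun i ih => by
    simpa [finRotate_apply, Fin.coeSucc_eq_succ] using s.trans' ih (h i.castSucc)
  exact eq_top_iff.2 fun a b _ => s.trans' (s.symm' (h₀ a)) (h₀ b)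

lemma IsBlockPerm.sup_eq_top_of_kreweras (hp : IsBlockPerm s p)
    (ht : IsBlockPerm t (p⁻¹ * finRotate (m + 1))) : s ⊔ t = ⊤ :=
  eq_top_of_rel_finRotate fun i => by
    have h₁ := Setoid.le_def.1 (le_sup_right : t ≤ s ⊔ t) (ht.rel_apply i)
    have h₂ := Setoid.le_def.1 (le_sup_left : s ≤ s ⊔ t)
      (hp.rel_apply ((p⁻¹ * finRotate (m + 1)) i))
    simp only [Equiv.Perm.mul_apply, Equiv.Perm.coe_inv, Equiv.apply_symm_apply] at h₂
    exact Setoid.trans' _ h₁ h₂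

lemma IsBlockPerm.blocks_add_blocks_kreweras (hp : IsBlockPerm s p)
    (ht : IsBlockPerm t (p⁻¹ * finRotate (m + 1))) : blocks s + blocks t = m + 2 := by
  have := hp.blocks_add_card_lt_apply
  have := ht.blocks_add_card_lt_apply
  have := card_lt_apply_add_card_lt_kreweras_apply p
  omega

end Kreweras

theorem dist_kreweras_general (n : ℕ) (π κ : NC n)
    (p q : Equiv.Perm (Fin n)) (hp : IsBlockPerm π.1 p) (hq : IsBlockPerm κ.1 q)
    (hkr : q = p⁻¹ * finRotate n) :
    (hasse n).dist π κ = n - 1 := by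
  subst hkr
  cases n with
  | zero => rw [show π = κ from Subtype.ext (Setoid.ext fun a => a.elim0), SimpleGraph.dist_self]
  | succ m =>
    have hsum := hp.blocks_add_blocks_kreweras hq
    obtain ⟨w, hw⟩ := NC.exists_walk_length_add_blocks_add_blocks π κ
    have hupper := SimpleGraph.dist_le w
    have hlower := SimpleGraph.Reachable.abs_sub_le_dist
      (fun _ _ => NC.abs_potential_sub_le_one_of_adj κ.1) ⟨w⟩
    rw [NC.potential, NC.potential, hp.sup_eq_top_of_kreweras hq, sup_idem, blocks_top,
      abs_le] at hlower
    omega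

/-- The Hasse-diagram distance between `π` and its Kreweras complement `κ`
(defined by `P_κ = P_π⁻¹ · (1 2 ... n)`) equals `n - 1`. -/
theorem dist_kreweras (n : ℕ) (hn : 1 ≤ n) (π κ : NC n)
    (p q : Equiv.Perm (Fin n)) (hp : IsBlockPerm π.1 p) (hq : IsBlockPerm κ.1 q)
    (hkr : q = p⁻¹ * finRotate n) :
    (hasse n).dist π κ = n - 1 :=
  dist_kreweras_general n π κ p q hp hq hkr
end
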